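/- Let g1, g2, g3 be dg Lie algebras over a field of characteristic zero and F: g1 → g2, G: g2 → g3 L∞ morphisms. Precomposition with F defines a strict morphism of dg Lie algebras F^!: k(g2, g3) → k(g1, g3) between convolution dg Lie algebras (given by θ -> θ ∘ F_* where F_*: C_+(g1) → C_+(g2) is the coalgebra map of F), and under the identification of Maurer-Cartan elements with L∞ morphisms one has (F^!)(G) = G ∘ F. -/
import Mathlib


/-- A (cohomologically) ℤ-graded differential graded Lie algebra over a field `k`. -/
structure DGLA (k : Type*) (V : Type*) [Field k] [AddCommGroup V] [Module k V] where
  grading : ℤ → Submodule k V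
  isInternal : DirectSum.IsInternal grading
  d : V →ₗ[k] V
  d_mem : ∀ (i : ℤ), ∀ x ∈ grading i, d x ∈ grading (i + 1)
  d_sq : ∀ x : V, d (d x) = 0
  bracket : V →ₗ[k] V →ₗ[k] V
  bracket_mem : ∀ (i j : ℤ), ∀ x ∈ grading i, ∀ y ∈ grading j, bracket x y ∈ grading (i + j)
  antisymm : ∀ (i j : ℤ), ∀ x ∈ grading i, ∀ y ∈ grading j,
    bracket y x = ((Int.negOnePow (i * j + 1) : ℤˣ) : ℤ) • bracket x y
  jacobi : ∀ (i j : ℤ), ∀ x ∈ grading i, ∀ y ∈ grading j, ∀ z : V,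
    bracket x (bracket y z) = bracket (bracket x y) z
      + ((Int.negOnePow (i * j) : ℤˣ) : ℤ) • bracket y (bracket x z)
  leibniz : ∀ (i : ℤ), ∀ x ∈ grading i, ∀ y : V,
    d (bracket x y) = bracket (d x) y + ((Int.negOnePow i : ℤˣ) : ℤ) • bracket x (d y)


open scoped TensorProduct

/-- A ℤ-graded cocommutative dg coalgebra (without counit) over `k`.  The grading is
recorded through its system of projections `pr i` onto the homogeneous components,
together with the "sign" operator `sgn` acting by `(-1)^i` in degree `i` (used to
express the Koszul signs); `Δ` is the (coassociative, cocommutative) coproduct and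
`dC` the codifferential, a coderivation of square zero of degree `+1`. -/
structure GradedCoalg (k : Type*) (W : Type*) [Field k] [AddCommGroup W] [Module k W] where
  pr : ℤ → W →ₗ[k] W
  pr_orth : ∀ i j : ℤ, (pr i) ∘ₗ (pr j) = if i = j then pr j else 0
  pr_fin : ∀ x : W, (Function.support fun i : ℤ => pr i x).Finite
  pr_sum : ∀ x : W, ∑ᶠ i : ℤ, pr i x = x
  sgn : W →ₗ[k] W
  sgn_apply : ∀ (i : ℤ) (x : W), sgn (pr i x) = ((Int.negOnePow i : ℤˣ) : ℤ) • pr i x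
  Δ : W →ₗ[k] W ⊗[k] W
  dC : W →ₗ[k] W
  dC_sq : ∀ x : W, dC (dC x) = 0
  dC_deg : ∀ i : ℤ, (pr (i + 1)) ∘ₗ dC = dC ∘ₗ (pr i)
  Δ_deg : ∀ (n : ℤ) (x : W),
    Δ (pr n x) = ∑ᶠ i : ℤ, TensorProduct.map (pr i) (pr (n - i)) (Δ (pr n x))
  coassoc : (TensorProduct.map Δ (LinearMap.id : W →ₗ[k] W)) ∘ₗ Δ
      = (TensorProduct.assoc k W W W).symm.toLinearMap
          ∘ₗ (TensorProduct.map (LinearMap.id : W →ₗ[k] W) Δ) ∘ₗ Δ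
  cocomm : ∀ x : W,
    (∑ᶠ p : ℤ × ℤ, ((Int.negOnePow (p.1 * p.2) : ℤˣ) : ℤ) •
      (TensorProduct.comm k W W) ((TensorProduct.map (pr p.1) (pr p.2)) (Δ x))) = Δ x
  coderiv : ∀ x : W,
    Δ (dC x) = TensorProduct.map dC (LinearMap.id : W →ₗ[k] W) (Δ x)
      + TensorProduct.map sgn dC (Δ x)

variable {k W V : Type*} [Field k] [AddCommGroup W] [Module k W]
  [AddCommGroup V] [Module k V]

/-- The Koszul twist by an element of degree `b`: the identity if `b` is even and the
sign operator if `b` is odd; it implements the Koszul sign `(-1)^{b·deg c}`. -/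
def GradedCoalg.twist (C : GradedCoalg k W) (b : ℤ) : W →ₗ[k] W :=
  if Even b then LinearMap.id else C.sgn

/-- The convolution bracket `[θ₁, θ₂]` of `θ₁` (of any degree) and `θ₂` of degree `b`:
the composition `C → C ⊗ C → g ⊗ g → g` of the coproduct, `θ₁ ⊗ θ₂` (with Koszul
signs), and the bracket of `g`. -/
noncomputable def convBr (C : GradedCoalg k W) (g : DGLA k V) (b : ℤ)
    (θ₁ θ₂ : W →ₗ[k] V) : W →ₗ[k] V :=
  (TensorProduct.lift g.bracket) ∘ₗ (TensorProduct.map (θ₁ ∘ₗ C.twist b) θ₂) ∘ₗ C.Δ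

/-- The convolution differential `dθ = d_g ∘ θ - (-1)^{deg θ} θ ∘ d_C` of an element
`θ` of degree `a`. -/
noncomputable def convD (C : GradedCoalg k W) (g : DGLA k V) (a : ℤ)
    (θ : W →ₗ[k] V) : W →ₗ[k] V :=
  g.d ∘ₗ θ - ((Int.negOnePow a : ℤˣ) : ℤ) • (θ ∘ₗ C.dC)

/-- `θ : Hom(C, g)` is homogeneous of degree `n`: it shifts degrees by `n`. -/
def HomDeg (C : GradedCoalg k W) (g : DGLA k V) (n : ℤ) (θ : W →ₗ[k] V) : Prop :=
  ∀ (i : ℤ) (x : W), θ (C.pr i x) ∈ g.grading (i + n)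


/-- The Maurer-Cartan equation in the convolution dg Lie algebra `Hom(C, g)` for a
degree `1` element: its solutions are exactly the `L∞` morphisms. -/
def convIsMC (C : GradedCoalg k W) (g : DGLA k V) (θ : W →ₗ[k] V) : Prop :=
  convD C g 1 θ + (2⁻¹ : k) • convBr C g 1 θ θ = 0

private lemma lmap_finsum {k M N ι : Type*} [Field k] [AddCommGroup M] [Module k M]
    [AddCommGroup N] [Module k N] (f : M →ₗ[k] N) {g : ι → M}
    (hg : (Function.support g).Finite) : f (∑ᶠ i, g i) = ∑ᶠ i, f (g i) :=
  f.toAddMonoidHom.map_finsum hg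

/-- Let `g1, g2, g3` be dg Lie algebras and `F : g1 → g2` an `L∞`
morphism, with associated dg coalgebra map `F_* : C_+(g1) → C_+(g2)` (here taken as an
abstract dg coalgebra map `Fm` between the corresponding coalgebras `C₁, C₂`, compatible
with coproducts, codifferentials and gradings).  Then precomposition
`F^! : θ ↦ θ ∘ F_*` is a strict morphism of convolution dg Lie algebras
`k(g2, g3) → k(g1, g3)`: it preserves degrees, commutes with the differentials,
intertwines the convolution brackets, sends Maurer-Cartan elements (i.e. `L∞` morphisms
`G : g2 → g3`) to Maurer-Cartan elements, and under the identification of Maurer-Cartan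
elements with `L∞` morphisms, `F^!(G) = G ∘ F`. -/
theorem statement18 {k W₁ W₂ V : Type*} [Field k] [CharZero k]
    [AddCommGroup W₁] [Module k W₁] [AddCommGroup W₂] [Module k W₂]
    [AddCommGroup V] [Module k V]
    (C₁ : GradedCoalg k W₁) (C₂ : GradedCoalg k W₂) (g₃ : DGLA k V)
    (Fm : W₁ →ₗ[k] W₂)
    (hFΔ : ∀ x : W₁, C₂.Δ (Fm x) = TensorProduct.map Fm Fm (C₁.Δ x))
    (hFd : ∀ x : W₁, Fm (C₁.dC x) = C₂.dC (Fm x))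
    (hFpr : ∀ i : ℤ, Fm ∘ₗ C₁.pr i = C₂.pr i ∘ₗ Fm) :
    -- `F^!` preserves degrees
    (∀ (n : ℤ) (θ : W₂ →ₗ[k] V), HomDeg C₂ g₃ n θ → HomDeg C₁ g₃ n (θ ∘ₗ Fm)) ∧
    -- `F^!` commutes with the convolution differentials
    (∀ (n : ℤ) (θ : W₂ →ₗ[k] V), HomDeg C₂ g₃ n θ →
       convD C₁ g₃ n (θ ∘ₗ Fm) = (convD C₂ g₃ n θ) ∘ₗ Fm) ∧
    -- `F^!` intertwines the convolution brackets
    (∀ (a b : ℤ) (θ₁ θ₂ : W₂ →ₗ[k] V), HomDeg C₂ g₃ a θ₁ → HomDeg C₂ g₃ b θ₂ →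
       convBr C₁ g₃ b (θ₁ ∘ₗ Fm) (θ₂ ∘ₗ Fm) = (convBr C₂ g₃ b θ₁ θ₂) ∘ₗ Fm) ∧
    -- `F^!` sends Maurer-Cartan elements (viz. `L∞` morphisms `G : g2 → g3`) to
    -- Maurer-Cartan elements, and `F^!(G) = G ∘ F_*`
    (∀ G : W₂ →ₗ[k] V, HomDeg C₂ g₃ 1 G → convIsMC C₂ g₃ G →
       convIsMC C₁ g₃ (G ∘ₗ Fm)) := by
  have hpr : ∀ (i : ℤ) (x : W₁), Fm (C₁.pr i x) = C₂.pr i (Fm x) := fun i x =>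
    LinearMap.congr_fun (hFpr i) x
  have hsgn : ∀ x : W₁, Fm (C₁.sgn x) = C₂.sgn (Fm x) := by
    intro x
    have h1 : C₁.sgn x = ∑ᶠ i : ℤ, ((Int.negOnePow i : ℤˣ) : ℤ) • C₁.pr i x := by
      conv_lhs => rw [← C₁.pr_sum x]
      rw [lmap_finsum _ (C₁.pr_fin x)]
      exact finsum_congr fun i => C₁.sgn_apply i x
    have hfin : (Function.support fun i : ℤ =>
        ((Int.negOnePow i : ℤˣ) : ℤ) • C₁.pr i x).Finite := by
      refine (C₁.pr_fin x).subset ?_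
      intro i hi
      simp only [Function.mem_support] at hi ⊢
      intro h; apply hi; rw [h, smul_zero]
    rw [h1, lmap_finsum _ hfin]
    have h2 : ∀ i : ℤ, Fm (((Int.negOnePow i : ℤˣ) : ℤ) • C₁.pr i x)
        = C₂.sgn (C₂.pr i (Fm x)) := by
      intro i
      rw [map_zsmul, hpr, ← C₂.sgn_apply]
    rw [finsum_congr h2, ← lmap_finsum _ (C₂.pr_fin (Fm x)), C₂.pr_sum]
  have htw : ∀ b : ℤ, Fm ∘ₗ C₁.twist b = C₂.twist b ∘ₗ Fm := by
    intro b
    unfold GradedCoalg.twist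
    split
    · simp
    · ext x; exact hsgn x
  have part1 : ∀ (n : ℤ) (θ : W₂ →ₗ[k] V), HomDeg C₂ g₃ n θ →
      HomDeg C₁ g₃ n (θ ∘ₗ Fm) := by
    intro n θ h i x
    simp only [LinearMap.comp_apply]
    rw [hpr]
    exact h i (Fm x)
  have part2 : ∀ (n : ℤ) (θ : W₂ →ₗ[k] V),
      convD C₁ g₃ n (θ ∘ₗ Fm) = (convD C₂ g₃ n θ) ∘ₗ Fm := by
    intro n θ
    ext x
    simp only [convD, LinearMap.sub_apply, LinearMap.comp_apply, LinearMap.smul_apply,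
      LinearMap.sub_comp, LinearMap.smul_comp]
    rw [hFd]
  have part3 : ∀ (b : ℤ) (θ₁ θ₂ : W₂ →ₗ[k] V),
      convBr C₁ g₃ b (θ₁ ∘ₗ Fm) (θ₂ ∘ₗ Fm) = (convBr C₂ g₃ b θ₁ θ₂) ∘ₗ Fm := by
    intro b θ₁ θ₂
    ext x
    have hmap : TensorProduct.map ((θ₁ ∘ₗ Fm) ∘ₗ C₁.twist b) (θ₂ ∘ₗ Fm)
        = (TensorProduct.map (θ₁ ∘ₗ C₂.twist b) θ₂) ∘ₗ TensorProduct.map Fm Fm := by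
      rw [← TensorProduct.map_comp]
      congr 1
      rw [LinearMap.comp_assoc, htw, ← LinearMap.comp_assoc]
    simp only [convBr, LinearMap.comp_apply, hFΔ, hmap]
  refine ⟨part1, fun n θ _ => part2 n θ, fun a b θ₁ θ₂ _ _ => part3 b θ₁ θ₂, ?_⟩
  intro G hG hMC
  unfold convIsMC at hMC ⊢
  rw [part2, part3, ← LinearMap.smul_comp, ← LinearMap.add_comp, hMC,
    LinearMap.zero_comp]
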